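/- arXiv:1803.09959 — 2 statements merged into one kernel-verified Lean document; each statement's English description precedes it below -/
import Mathlib

section
/- Let (A, Γ, G, δ) be a graded-simple G-graded algebra and let H = {g ∈ G : C(A)_g ≠ 0} be the support of the induced grading on the centroid. Then H is a subgroup of G. -/
/-! Generic framework: nonassociative algebras are modules `B` over a field `F`
equipped with an explicit multiplication `mul : B → B → B`. -/

/-- `mul` is `F`-bilinear. -/
def IsBilinearMul (F : Type*) {B : Type*} [Field F] [AddCommGroup B] [Module F B]
    (mul : B → B → B) : Prop :=
  (∀ x y z : B, mul (x + y) z = mul x z + mul y z) ∧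
  (∀ x y z : B, mul x (y + z) = mul x y + mul x z) ∧
  (∀ (c : F) (x y : B), mul (c • x) y = c • mul x y) ∧
  (∀ (c : F) (x y : B), mul x (c • y) = c • mul x y)

/-- The product of the subspaces `U` and `V` is contained in `W`. -/
def SubMulLE {F B : Type*} [Field F] [AddCommGroup B] [Module F B]
    (mul : B → B → B) (U V W : Submodule F B) : Prop :=
  ∀ u ∈ U, ∀ v ∈ V, mul u v ∈ W

/-- The product of the subspaces `U` and `V` is nonzero. -/
def SubMulNonzero {F B : Type*} [Field F] [AddCommGroup B] [Module F B]
    (mul : B → B → B) (U V : Submodule F B) : Prop :=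
  ∃ u ∈ U, ∃ v ∈ V, mul u v ≠ 0

/-- A grading of the subalgebra `S` of `(B, mul)`: a set `Γ` of nonzero subspaces of `S`
whose (direct) sum is `S`, closed under multiplication. -/
structure IsGradingOn {F B : Type*} [Field F] [AddCommGroup B] [Module F B]
    (mul : B → B → B) (S : Submodule F B) (Γ : Set (Submodule F B)) : Prop where
  ne_bot : ∀ U ∈ Γ, U ≠ ⊥
  le : ∀ U ∈ Γ, U ≤ S
  indep : sSupIndep Γ
  total : sSup Γ = S
  mul_closed : ∀ U ∈ Γ, ∀ V ∈ Γ, ∃ W ∈ Γ, SubMulLE mul U V W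

/-- A grading on the whole algebra `(B, mul)`. -/
def IsGrading {F B : Type*} [Field F] [AddCommGroup B] [Module F B]
    (mul : B → B → B) (Γ : Set (Submodule F B)) : Prop :=
  IsGradingOn mul ⊤ Γ

/-- A degree map `δ : Γ → G` compatible with the grading relations:
`δ U + δ V = δ W` whenever `0 ≠ U·V ⊆ W`. -/
def IsCompatMap {F B : Type*} [Field F] [AddCommGroup B] [Module F B]
    (mul : B → B → B) (Γ : Set (Submodule F B))
    (G : Type*) [AddCommGroup G] (δ : Submodule F B → G) : Prop :=
  ∀ U ∈ Γ, ∀ V ∈ Γ, ∀ W ∈ Γ,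
    SubMulNonzero mul U V → SubMulLE mul U V W → δ U + δ V = δ W

/-- `(G, δ)` is the universal group of the grading `Γ`: `δ` is compatible and every compatible
degree map factors through `δ` via a unique group homomorphism. -/
structure IsUniversalGroup {F B : Type*} [Field F] [AddCommGroup B] [Module F B]
    (mul : B → B → B) (Γ : Set (Submodule F B))
    (G : Type) [AddCommGroup G] (δ : Submodule F B → G) : Prop where
  compat : IsCompatMap mul Γ G δ
  universal : ∀ (H : Type) (instH : AddCommGroup H) (δ' : Submodule F B → H),
    IsCompatMap mul Γ H δ' → ∃! φ : G →+ H, ∀ U ∈ Γ, φ (δ U) = δ' U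

/-- `Γ` is a group-grading: it can be realized by an injective compatible degree map into an
abelian group. -/
def IsGroupGrading {F B : Type*} [Field F] [AddCommGroup B] [Module F B]
    (mul : B → B → B) (Γ : Set (Submodule F B)) : Prop :=
  ∃ (G : Type) (instG : AddCommGroup G) (δ : Submodule F B → G),
    Set.InjOn δ Γ ∧ @IsCompatMap F B _ _ _ mul Γ G instG δ

/-- `Γ''` refines `Γ`: every component of `Γ''` is contained in a component of `Γ`. -/
def GradRefines {F B : Type*} [Field F] [AddCommGroup B] [Module F B]
    (Γ'' Γ : Set (Submodule F B)) : Prop :=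
  ∀ U ∈ Γ'', ∃ W ∈ Γ, U ≤ W

/-- `Γ` is a fine grading of `S`: it admits no proper refinement. -/
def IsFineGradingOn {F B : Type*} [Field F] [AddCommGroup B] [Module F B]
    (mul : B → B → B) (S : Submodule F B) (Γ : Set (Submodule F B)) : Prop :=
  IsGradingOn mul S Γ ∧
    ∀ Γ'' : Set (Submodule F B), IsGradingOn mul S Γ'' → GradRefines Γ'' Γ → Γ'' = Γ

/-- `Γ` is a fine group-grading of `S`: it admits no proper refinement among group-gradings. -/
def IsFineGroupGradingOn {F B : Type*} [Field F] [AddCommGroup B] [Module F B]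
    (mul : B → B → B) (S : Submodule F B) (Γ : Set (Submodule F B)) : Prop :=
  IsGradingOn mul S Γ ∧ IsGroupGrading mul Γ ∧
    ∀ Γ'' : Set (Submodule F B), IsGradingOn mul S Γ'' → IsGroupGrading mul Γ'' →
      GradRefines Γ'' Γ → Γ'' = Γ

/-- `I` is a (two-sided) ideal of the subalgebra `S` of `(B, mul)`. -/
def IsIdealIn {F B : Type*} [Field F] [AddCommGroup B] [Module F B]
    (mul : B → B → B) (S I : Submodule F B) : Prop :=
  I ≤ S ∧ ∀ x ∈ I, ∀ a ∈ S, mul a x ∈ I ∧ mul x a ∈ I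

/-- The subalgebra `J` of `(B, mul)` is a simple algebra: its product is nonzero and it has no
proper nonzero ideals. -/
def IsSimpleAlgOn {F B : Type*} [Field F] [AddCommGroup B] [Module F B]
    (mul : B → B → B) (J : Submodule F B) : Prop :=
  (∃ x ∈ J, ∃ y ∈ J, mul x y ≠ 0) ∧
    ∀ I : Submodule F B, IsIdealIn mul J I → I = ⊥ ∨ I = J

/-- The subalgebra `S` of `(B, mul)` is semisimple: a finite direct sum of simple ideals. -/
def IsSemisimpleOn {F B : Type*} [Field F] [AddCommGroup B] [Module F B]
    (mul : B → B → B) (S : Submodule F B) : Prop :=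
  ∃ (n : ℕ) (J : Fin n → Submodule F B), iSupIndep J ∧ (⨆ i, J i) = S ∧
    ∀ i, IsIdealIn mul S (J i) ∧ IsSimpleAlgOn mul (J i)

/-- `I` is a graded submodule with respect to the grading family `𝒜`. -/
def IsGradedSubmoduleFam {F B G : Type*} [Field F] [AddCommGroup B] [Module F B]
    (𝒜 : G → Submodule F B) (I : Submodule F B) : Prop :=
  I = ⨆ g, I ⊓ 𝒜 g

/-- `I` is a graded submodule with respect to the set-grading `Γ`. -/
def IsGradedSubmoduleSet {F B : Type*} [Field F] [AddCommGroup B] [Module F B]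
    (Γ : Set (Submodule F B)) (I : Submodule F B) : Prop :=
  I = ⨆ U ∈ Γ, I ⊓ U

/-- The algebra `(B, mul)` with the `G`-grading `𝒜` is graded-simple: `B·B ≠ 0` and there are
no proper nonzero graded ideals. -/
def IsGradedSimpleFam {F B G : Type*} [Field F] [AddCommGroup B] [Module F B]
    (mul : B → B → B) (𝒜 : G → Submodule F B) : Prop :=
  (∃ a b : B, mul a b ≠ 0) ∧
    ∀ I : Submodule F B, IsIdealIn mul ⊤ I → IsGradedSubmoduleFam 𝒜 I → I = ⊥ ∨ I = ⊤

/-- The centroid of `(B, mul)`, as a set of `F`-linear endomorphisms. -/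
def centroidSet {F B : Type*} [Field F] [AddCommGroup B] [Module F B]
    (mul : B → B → B) : Set (Module.End F B) :=
  {c | ∀ a b : B, c (mul a b) = mul (c a) b ∧ c (mul a b) = mul a (c b)}

/-- The centroid of `(B, mul)`, as a submodule of `End_F(B)` (needs bilinearity of `mul`). -/
def centroid {F B : Type*} [Field F] [AddCommGroup B] [Module F B]
    (mul : B → B → B) (hbil : IsBilinearMul F mul) : Submodule F (Module.End F B) where
  carrier := centroidSet mul
  add_mem' := by
    rintro c d hc hd
    intro a b
    obtain ⟨hc1, hc2⟩ := hc a b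
    obtain ⟨hd1, hd2⟩ := hd a b
    constructor
    · rw [LinearMap.add_apply, hc1, hd1, LinearMap.add_apply, hbil.1]
    · rw [LinearMap.add_apply, hc2, hd2, LinearMap.add_apply, hbil.2.1]
  zero_mem' := by
    intro a b
    have h0 : ∀ y : B, mul 0 y = 0 := fun y => by
      have := hbil.2.2.1 0 0 y; simpa using this
    have h0' : ∀ y : B, mul y 0 = 0 := fun y => by
      have := hbil.2.2.2 0 y 0; simpa using this
    simp [h0, h0']
  smul_mem' := by
    rintro r c hc a b
    obtain ⟨hc1, hc2⟩ := hc a b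
    constructor
    · rw [LinearMap.smul_apply, hc1, LinearMap.smul_apply, hbil.2.2.1]
    · rw [LinearMap.smul_apply, hc2, LinearMap.smul_apply, hbil.2.2.2]

/-- Endomorphisms shifting degrees by `g` with respect to the grading family `𝒜`. -/
def endDegree {F B G : Type*} [Field F] [AddCommGroup B] [Module F B] [AddCommGroup G]
    (𝒜 : G → Submodule F B) (g : G) : Submodule F (Module.End F B) where
  carrier := {c | ∀ g' : G, ∀ x ∈ 𝒜 g', c x ∈ 𝒜 (g + g')}
  add_mem' := fun hc hd g' x hx => by
    simpa [LinearMap.add_apply] using add_mem (hc g' x hx) (hd g' x hx)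
  zero_mem' := fun g' x hx => by simpa using zero_mem _
  smul_mem' := fun r c hc g' x hx => by
    simpa [LinearMap.smul_apply] using Submodule.smul_mem _ r (hc g' x hx)

/-- The homogeneous component of degree `g` of the centroid. -/
def centroidComponent {F B G : Type*} [Field F] [AddCommGroup B] [Module F B] [AddCommGroup G]
    (mul : B → B → B) (hbil : IsBilinearMul F mul)
    (𝒜 : G → Submodule F B) (g : G) : Submodule F (Module.End F B) :=
  centroid mul hbil ⊓ endDegree 𝒜 g

/-! Loop algebras. We realize the loop algebra inside `G →₀ A` (the `A`-span of the group
algebra `F G`, with `x ⊗ g` corresponding to `Finsupp.single g x`), with the convolution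
product. -/

/-- Convolution product on `G →₀ A` induced by `mul`; under `x ⊗ g ↦ single g x` this is the
multiplication of `A ⊗ F[G]`. -/
noncomputable def convMul {A : Type*} {G : Type*} [AddCommGroup A]
    [AddCommGroup G] (mul : A → A → A) (f g : G →₀ A) : G →₀ A :=
  f.sum fun a x => g.sum fun b y => Finsupp.single (a + b) (mul x y)

/-- The loop algebra `L_π(A) = ⊕_g A_{π(g)} ⊗ g` as a submodule of `G →₀ A`. -/
def loopSubmodule {F A : Type*} {G Gb : Type*} [Field F] [AddCommGroup A] [Module F A]
    [AddCommGroup G] [AddCommGroup Gb] (π : G →+ Gb) (𝒜 : Gb → Submodule F A) :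
    Submodule F (G →₀ A) where
  carrier := {f | ∀ g : G, f g ∈ 𝒜 (π g)}
  add_mem' := fun hf hg g => by simpa [Finsupp.add_apply] using add_mem (hf g) (hg g)
  zero_mem' := fun g => by simp
  smul_mem' := fun r f hf g => by
    simpa [Finsupp.smul_apply] using Submodule.smul_mem _ r (hf g)

/-- The multiplication of the loop algebra. -/
noncomputable def loopMul {F A : Type*} {G Gb : Type*} [Field F] [AddCommGroup A] [Module F A]
    [AddCommGroup G] [AddCommGroup Gb] (mul : A → A → A) (π : G →+ Gb)
    (𝒜 : Gb → Submodule F A)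
    (hgmul : ∀ g h : Gb, ∀ x ∈ 𝒜 g, ∀ y ∈ 𝒜 h, mul x y ∈ 𝒜 (g + h))
    (f g : ↥(loopSubmodule π 𝒜)) : ↥(loopSubmodule π 𝒜) :=
  ⟨convMul mul f.1 g.1, by
    intro k
    classical
    simp only [convMul, Finsupp.sum_apply]
    refine Submodule.finsuppSum_mem _ _ _ _ fun a _ => ?_
    refine Submodule.finsuppSum_mem _ _ _ _ fun b _ => ?_
    simp only [Finsupp.single_apply]
    split_ifs with h
    · have hk : π k = π a + π b := by rw [← h, map_add]
      rw [hk]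
      exact hgmul _ _ _ (f.2 a) _ (g.2 b)
    · exact zero_mem _⟩

/-- The homogeneous component of degree `g` of the loop algebra. -/
noncomputable def loopComponent {F A : Type*} {G Gb : Type*} [Field F] [AddCommGroup A] [Module F A]
    [AddCommGroup G] [AddCommGroup Gb] (π : G →+ Gb) (𝒜 : Gb → Submodule F A) (g : G) :
    Submodule F ↥(loopSubmodule π 𝒜) :=
  Submodule.comap (loopSubmodule π 𝒜).subtype ((𝒜 (π g)).map (Finsupp.lsingle g))

/-- The set of homogeneous components of the `G`-grading of the loop algebra, as submodules of
the ambient `G →₀ A`. -/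
def loopGradingSet {F A : Type*} {G Gb : Type*} [Field F] [AddCommGroup A] [Module F A]
    [AddCommGroup G] [AddCommGroup Gb] (π : G →+ Gb) (𝒜 : Gb → Submodule F A) :
    Set (Submodule F (G →₀ A)) :=
  {S | ∃ g : G, 𝒜 (π g) ≠ ⊥ ∧ S = (𝒜 (π g)).map (Finsupp.lsingle g)}

/-- The set of homogeneous components of the grading family `𝒜`. -/
def famGradingSet {F A Gb : Type*} [Field F] [AddCommGroup A] [Module F A]
    (𝒜 : Gb → Submodule F A) : Set (Submodule F A) :=
  {S | ∃ gb : Gb, 𝒜 gb ≠ ⊥ ∧ S = 𝒜 gb}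

/-! A nonzero homogeneous element `c` of the centroid, of degree `g`, commutes with multiplications,
so its kernel and image are ideals; and since it shifts every homogeneous component by `g`,
these ideals are graded. Graded-simplicity then makes `c` bijective. Hence `C(A)_0` contains
the identity, composing nonzero elements of degrees `g` and `h` gives a nonzero element of
degree `g + h`, and the inverse of a nonzero element of degree `g` is a nonzero element of the
centroid of degree `-g`. -/

theorem IsBilinearMul.mul_zero {F B : Type*} [Field F] [AddCommGroup B] [Module F B]
    {mul : B → B → B} (hbil : IsBilinearMul F mul) (x : B) : mul x 0 = 0 := by
  simpa using (hbil.2.1 x 0 0).symm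

theorem IsBilinearMul.zero_mul {F B : Type*} [Field F] [AddCommGroup B] [Module F B]
    {mul : B → B → B} (hbil : IsBilinearMul F mul) (x : B) : mul 0 x = 0 := by
  simpa using (hbil.1 0 0 x).symm

theorem IsGradedSimpleFam.nontrivial {F B G : Type*} [Field F] [AddCommGroup B] [Module F B]
    {mul : B → B → B} {𝒜 : G → Submodule F B} (hgs : IsGradedSimpleFam mul 𝒜) :
    Nontrivial B :=
  let ⟨_, _, hab⟩ := hgs.1
  ⟨⟨_, _, hab⟩⟩

theorem isGradedSubmoduleFam_of_isHomogeneous {F B G : Type*} [Field F] [AddCommGroup B]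
    [Module F B] [DecidableEq G] (𝒜 : G → Submodule F B)
    [DirectSum.Decomposition 𝒜] {I : Submodule F B} (hI : DirectSum.SetLike.IsHomogeneous 𝒜 I) :
    IsGradedSubmoduleFam 𝒜 I := by
  classical
  refine le_antisymm (fun x hx => ?_) (iSup_le fun _ => inf_le_left)
  rw [← DirectSum.sum_support_decompose 𝒜 x]
  exact Submodule.sum_mem _ fun k _ =>
    Submodule.mem_iSup_of_mem k ⟨hI k hx, (DirectSum.decompose 𝒜 x k).2⟩

section Centroid

variable {F B G : Type*} [Field F] [AddCommGroup B] [Module F B] [AddCommGroup G]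

theorem decompose_apply_of_mem_endDegree [DecidableEq G] {𝒜 : G → Submodule F B}
    [DirectSum.Decomposition 𝒜] {g : G} {c : Module.End F B} (hc : c ∈ endDegree 𝒜 g)
    (x : B) (k : G) :
    (DirectSum.decompose 𝒜 (c x) (g + k) : B) = c (DirectSum.decompose 𝒜 x k) := by
  induction x using DirectSum.Decomposition.inductionOn 𝒜 with
  | zero => simp
  | @homogeneous i x =>
    have hcx : c x ∈ 𝒜 (g + i) := hc i x x.2
    by_cases hik : i = k
    · subst hik
      rw [DirectSum.decompose_of_mem_same 𝒜 hcx, DirectSum.decompose_of_mem_same 𝒜 x.2]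
    · rw [DirectSum.decompose_of_mem_ne 𝒜 hcx fun h => hik (add_left_cancel h),
        DirectSum.decompose_of_mem_ne 𝒜 x.2 hik, map_zero]
  | add x y hx hy => simp [hx, hy]

variable (mul : B → B → B) (hbil : IsBilinearMul F mul) (𝒜 : G → Submodule F B)

theorem isIdealIn_ker_of_mem_centroid {c : Module.End F B} (hc : c ∈ centroid mul hbil) :
    IsIdealIn mul ⊤ (LinearMap.ker c) :=
  ⟨le_top, fun x hx a _ => by
    rw [LinearMap.mem_ker] at hx
    refine ⟨?_, ?_⟩ <;> rw [LinearMap.mem_ker]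
    · rw [(hc a x).2, hx, hbil.mul_zero]
    · rw [(hc x a).1, hx, hbil.zero_mul]⟩

theorem isIdealIn_range_of_mem_centroid {c : Module.End F B} (hc : c ∈ centroid mul hbil) :
    IsIdealIn mul ⊤ (LinearMap.range c) :=
  ⟨le_top, fun _ hx a _ => by
    obtain ⟨y, rfl⟩ := hx
    exact ⟨⟨mul a y, (hc a y).2⟩, ⟨mul y a, (hc y a).1⟩⟩⟩

variable {𝒜}

theorem isHomogeneous_ker_of_mem_endDegree [DecidableEq G] [DirectSum.Decomposition 𝒜]
    {g : G} {c : Module.End F B} (hc : c ∈ endDegree 𝒜 g) :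
    DirectSum.SetLike.IsHomogeneous 𝒜 (LinearMap.ker c) := fun k x hx => by
  have hcx : c x = 0 := hx
  show c _ = 0
  rw [← decompose_apply_of_mem_endDegree hc, hcx]
  simp

theorem isHomogeneous_range_of_mem_endDegree [DecidableEq G] [DirectSum.Decomposition 𝒜]
    {g : G} {c : Module.End F B} (hc : c ∈ endDegree 𝒜 g) :
    DirectSum.SetLike.IsHomogeneous 𝒜 (LinearMap.range c) := fun k _ hx => by
  obtain ⟨y, rfl⟩ := hx
  rw [← add_neg_cancel_left g k, decompose_apply_of_mem_endDegree hc]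
  exact LinearMap.mem_range_self c _

theorem bijective_of_mem_centroidComponent [DecidableEq G] [DirectSum.Decomposition 𝒜]
    (hgs : IsGradedSimpleFam mul 𝒜) {g : G} {c : Module.End F B}
    (hc : c ∈ centroidComponent mul hbil 𝒜 g) (hc0 : c ≠ 0) : Function.Bijective c := by
  obtain ⟨hcen, hdeg⟩ := Submodule.mem_inf.mp hc
  constructor
  · rcases hgs.2 _ (isIdealIn_ker_of_mem_centroid mul hbil hcen)
        (isGradedSubmoduleFam_of_isHomogeneous 𝒜 (isHomogeneous_ker_of_mem_endDegree hdeg))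
      with h | h
    · exact LinearMap.ker_eq_bot.mp h
    · exact absurd (LinearMap.ker_eq_top.mp h) hc0
  · rcases hgs.2 _ (isIdealIn_range_of_mem_centroid mul hbil hcen)
        (isGradedSubmoduleFam_of_isHomogeneous 𝒜 (isHomogeneous_range_of_mem_endDegree hdeg))
      with h | h
    · exact absurd (LinearMap.range_eq_bot.mp h) hc0
    · exact LinearMap.range_eq_top.mp h

theorem id_mem_centroidComponent_zero : LinearMap.id ∈ centroidComponent mul hbil 𝒜 0 :=
  ⟨fun _ _ => ⟨rfl, rfl⟩, fun _ x hx => by simpa using hx⟩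

theorem comp_mem_centroidComponent {g h : G} {c d : Module.End F B}
    (hc : c ∈ centroidComponent mul hbil 𝒜 g) (hd : d ∈ centroidComponent mul hbil 𝒜 h) :
    c ∘ₗ d ∈ centroidComponent mul hbil 𝒜 (g + h) := by
  obtain ⟨ccen, cdeg⟩ := Submodule.mem_inf.mp hc
  obtain ⟨dcen, ddeg⟩ := Submodule.mem_inf.mp hd
  refine ⟨fun x y => ?_, fun k x hx => ?_⟩
  · simp only [LinearMap.comp_apply]
    exact ⟨by rw [(dcen x y).1, (ccen _ y).1], by rw [(dcen x y).2, (ccen x _).2]⟩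
  · rw [add_assoc]
    exact cdeg _ _ (ddeg k x hx)

theorem symm_mem_centroidComponent [DecidableEq G] [DirectSum.Decomposition 𝒜] {g : G}
    {e : B ≃ₗ[F] B} (he : (e : Module.End F B) ∈ centroidComponent mul hbil 𝒜 g) :
    (e.symm : Module.End F B) ∈ centroidComponent mul hbil 𝒜 (-g) := by
  obtain ⟨ecen, edeg⟩ := Submodule.mem_inf.mp he
  refine ⟨fun x y => ⟨e.injective ?_, e.injective ?_⟩, fun k x hx => ?_⟩
  · simpa using ((ecen (e.symm x) y).1).symm
  · simpa using ((ecen x (e.symm y)).2).symm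
  -- `e` maps the `(-g + k)`-component of `e⁻¹ x` to the `k`-component of `x`, which is `x`.
  · have hcomp : (e : Module.End F B) (DirectSum.decompose 𝒜 (e.symm x) (-g + k)) =
        (e : Module.End F B) (e.symm x) := by
      rw [← decompose_apply_of_mem_endDegree edeg, add_neg_cancel_left]
      simpa using DirectSum.decompose_of_mem_same 𝒜 hx
    simp only [LinearEquiv.coe_coe]
    rw [← e.injective hcomp]
    exact (DirectSum.decompose 𝒜 _ _).2

def centroidSupport [DecidableEq G] (hint : DirectSum.IsInternal 𝒜)
    (hgs : IsGradedSimpleFam mul 𝒜) : AddSubgroup G :=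
  letI := hint.chooseDecomposition
  haveI := hgs.nontrivial
  { carrier := {g | centroidComponent mul hbil 𝒜 g ≠ ⊥}
    zero_mem' := (Submodule.ne_bot_iff _).mpr ⟨_, id_mem_centroidComponent_zero mul hbil,
      LinearMap.ne_zero_of_injective Function.injective_id⟩
    add_mem' := fun hg hh => by
      obtain ⟨c, hc, hc0⟩ := (Submodule.ne_bot_iff _).mp hg
      obtain ⟨d, hd, hd0⟩ := (Submodule.ne_bot_iff _).mp hh
      have hcd := ((bijective_of_mem_centroidComponent mul hbil hgs hc hc0).1.comp
        (bijective_of_mem_centroidComponent mul hbil hgs hd hd0).1)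
      exact (Submodule.ne_bot_iff _).mpr ⟨_, comp_mem_centroidComponent mul hbil hc hd,
        LinearMap.ne_zero_of_injective hcd⟩
    neg_mem' := fun hg => by
      obtain ⟨c, hc, hc0⟩ := (Submodule.ne_bot_iff _).mp hg
      let e := LinearEquiv.ofBijective c (bijective_of_mem_centroidComponent mul hbil hgs hc hc0)
      exact (Submodule.ne_bot_iff _).mpr ⟨_, symm_mem_centroidComponent mul hbil (e := e) hc,
        LinearMap.ne_zero_of_injective e.symm.injective⟩ }

end Centroid

theorem stmt_10_general {F B : Type*} [Field F] [AddCommGroup B] [Module F B]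
    {G : Type*} [AddCommGroup G] [DecidableEq G]
    (mul : B → B → B) (hbil : IsBilinearMul F mul)
    (𝒜 : G → Submodule F B) (hint : DirectSum.IsInternal 𝒜)
    (hgs : IsGradedSimpleFam mul 𝒜) :
    ∃ H : AddSubgroup G, (H : Set G) = {g : G | centroidComponent mul hbil 𝒜 g ≠ ⊥} :=
  ⟨centroidSupport mul hbil hint hgs, rfl⟩

/-- for a graded-simple `G`-graded algebra, the support of the induced grading on
the centroid is a subgroup of `G`. -/
theorem stmt_10 {F B : Type*} [Field F] [AddCommGroup B] [Module F B]
    {G : Type*} [AddCommGroup G] [DecidableEq G]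
    (mul : B → B → B) (hbil : IsBilinearMul F mul)
    (𝒜 : G → Submodule F B) (hint : DirectSum.IsInternal 𝒜)
    (hgmul : ∀ g h : G, ∀ x ∈ 𝒜 g, ∀ y ∈ 𝒜 h, mul x y ∈ 𝒜 (g + h))
    (hgs : IsGradedSimpleFam mul 𝒜) :
    ∃ H : AddSubgroup G, (H : Set G) = {g : G | centroidComponent mul hbil 𝒜 g ≠ ⊥} :=
  stmt_10_general mul hbil 𝒜 hint hgs
end

section
/- Let G be an abelian group and (B, Γ, G, δ) a semisimple G-graded algebra (B is a finite direct sum of simple ideals). Then B decomposes as a direct sum of graded ideals B = B¹ ⊕ ⋯ ⊕ Bⁿ where each (Bⁱ, Γ|_{Bⁱ}, G, δ|_{Bⁱ}) is graded-simple and semisimple; each graded-simple ideal is a direct sum of some of the simple ideals of B, and the graded-simple factors are uniquely determined up to reordering. -/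
/-!
Every ideal of a semisimple algebra `B = ⨁ Sₖ` is the sum of the simple ideals `Sₖ` it contains,
and its two-sided annihilator is the sum of the remaining ones; in particular an ideal and its
annihilator are complementary ideals. Because the product respects degrees, the annihilator of a
graded ideal is graded. Consequently the graded ideal generated by `Sₖ` is also generated by every
`Sₗ` it contains, so these ideals are exactly the graded-simple graded ideals; distinct ones
annihilate each other and together they cover `B`. Any decomposition of `B` into graded-simple graded ideals consists of them
all, since the summand containing `Sₖ` is the graded ideal generated by `Sₖ`.
-/

namespace IsBilinearMul

variable {F B : Type*} [Field F] [AddCommGroup B] [Module F B] {mul : B → B → B}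

def toLinearMap₂ (hbil : IsBilinearMul F mul) : B →ₗ[F] B →ₗ[F] B :=
  LinearMap.mk₂ F mul hbil.1 hbil.2.2.1 hbil.2.1 hbil.2.2.2

theorem toLinearMap₂_apply (hbil : IsBilinearMul F mul) (x y : B) :
    hbil.toLinearMap₂ x y = mul x y :=
  rfl

theorem zero_mul_s14 (hbil : IsBilinearMul F mul) (y : B) : mul 0 y = 0 := by
  rw [← hbil.toLinearMap₂_apply, map_zero, LinearMap.zero_apply]

theorem mul_zero_s14 (hbil : IsBilinearMul F mul) (x : B) : mul x 0 = 0 := by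
  rw [← hbil.toLinearMap₂_apply, map_zero]

theorem sum_mul (hbil : IsBilinearMul F mul) {ι : Type*} (s : Finset ι) (x : ι → B) (y : B) :
    mul (∑ i ∈ s, x i) y = ∑ i ∈ s, mul (x i) y := by
  simp only [← hbil.toLinearMap₂_apply, map_sum, LinearMap.sum_apply]

theorem mul_sum (hbil : IsBilinearMul F mul) {ι : Type*} (s : Finset ι) (x : B) (y : ι → B) :
    mul x (∑ i ∈ s, y i) = ∑ i ∈ s, mul x (y i) := by
  simp only [← hbil.toLinearMap₂_apply, map_sum]

end IsBilinearMul

section Ideals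

variable {F B : Type*} [Field F] [AddCommGroup B] [Module F B] {mul : B → B → B}

def mulAnnihilator (hbil : IsBilinearMul F mul) (P : Submodule F B) : Submodule F B :=
  ⨅ y ∈ P, LinearMap.ker (hbil.toLinearMap₂.flip y) ⊓ LinearMap.ker (hbil.toLinearMap₂ y)

theorem mem_mulAnnihilator {hbil : IsBilinearMul F mul} {P : Submodule F B} {x : B} :
    x ∈ mulAnnihilator hbil P ↔ ∀ y ∈ P, mul x y = 0 ∧ mul y x = 0 := by
  simp [mulAnnihilator, Submodule.mem_iInf, IsBilinearMul.toLinearMap₂_apply]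

theorem mulAnnihilator_antitone (hbil : IsBilinearMul F mul) :
    Antitone (mulAnnihilator hbil) :=
  fun _ _ hPQ _ hx => mem_mulAnnihilator.2 fun y hy => mem_mulAnnihilator.1 hx y (hPQ hy)

theorem le_mulAnnihilator_comm {hbil : IsBilinearMul F mul} {P Q : Submodule F B} :
    P ≤ mulAnnihilator hbil Q ↔ Q ≤ mulAnnihilator hbil P :=
  ⟨fun h _ hy => mem_mulAnnihilator.2 fun _ hx => (mem_mulAnnihilator.1 (h hx) _ hy).symm,
    fun h _ hx => mem_mulAnnihilator.2 fun _ hy => (mem_mulAnnihilator.1 (h hy) _ hx).symm⟩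

theorem mulAnnihilator_iSup (hbil : IsBilinearMul F mul) {ι : Type*} (P : ι → Submodule F B) :
    mulAnnihilator hbil (⨆ i, P i) = ⨅ i, mulAnnihilator hbil (P i) := by
  refine le_antisymm (le_iInf fun i => mulAnnihilator_antitone hbil (le_iSup P i)) ?_
  intro x hx
  rw [Submodule.mem_iInf] at hx
  refine mem_mulAnnihilator.2 fun y hy => ?_
  induction hy using Submodule.iSup_induction' with
  | mem i y hy => exact mem_mulAnnihilator.1 (hx i) y hy
  | zero => exact ⟨hbil.mul_zero_s14 x, hbil.zero_mul_s14 x⟩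
  | add y z _ _ hy hz => rw [hbil.2.1, hbil.1, hy.1, hy.2, hz.1, hz.2]; simp

theorem isIdealIn_top : IsIdealIn mul ⊤ (⊤ : Submodule F B) :=
  ⟨le_rfl, fun _ _ _ _ => ⟨trivial, trivial⟩⟩

theorem IsIdealIn.mul_mem_inf {I J : Submodule F B} (hI : IsIdealIn mul ⊤ I)
    (hJ : IsIdealIn mul ⊤ J) {x y : B} (hx : x ∈ I) (hy : y ∈ J) : mul x y ∈ I ⊓ J :=
  ⟨(hI.2 x hx y trivial).2, (hJ.2 y hy x trivial).1⟩

theorem IsIdealIn.inf {I J : Submodule F B} (hI : IsIdealIn mul ⊤ I) (hJ : IsIdealIn mul ⊤ J) :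
    IsIdealIn mul ⊤ (I ⊓ J) :=
  ⟨le_top, fun x hx a ha =>
    ⟨⟨(hI.2 x hx.1 a ha).1, (hJ.2 x hx.2 a ha).1⟩, ⟨(hI.2 x hx.1 a ha).2, (hJ.2 x hx.2 a ha).2⟩⟩⟩

theorem IsIdealIn.sInf {𝓘 : Set (Submodule F B)} (h : ∀ I ∈ 𝓘, IsIdealIn mul ⊤ I) :
    IsIdealIn mul ⊤ (sInf 𝓘) :=
  ⟨le_top, fun x hx a ha =>
    ⟨Submodule.mem_sInf.2 fun I hI => ((h I hI).2 x (Submodule.mem_sInf.1 hx I hI) a ha).1,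
      Submodule.mem_sInf.2 fun I hI => ((h I hI).2 x (Submodule.mem_sInf.1 hx I hI) a ha).2⟩⟩

theorem IsIdealIn.iSup (hbil : IsBilinearMul F mul) {ι : Sort*} {I : ι → Submodule F B}
    (h : ∀ i, IsIdealIn mul ⊤ (I i)) : IsIdealIn mul ⊤ (⨆ i, I i) := by
  refine ⟨le_top, fun x hx a _ => ?_⟩
  induction hx using Submodule.iSup_induction' with
  | mem i x hx =>
    exact ⟨Submodule.mem_iSup_of_mem i ((h i).2 x hx a trivial).1,
      Submodule.mem_iSup_of_mem i ((h i).2 x hx a trivial).2⟩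
  | zero => rw [hbil.mul_zero_s14, hbil.zero_mul_s14]; exact ⟨zero_mem _, zero_mem _⟩
  | add x y _ _ hx hy => rw [hbil.2.1, hbil.1]; exact ⟨add_mem hx.1 hy.1, add_mem hx.2 hy.2⟩

theorem IsIdealIn.of_le {I P : Submodule F B} (hI : IsIdealIn mul ⊤ I) (hIP : I ≤ P) :
    IsIdealIn mul P I :=
  ⟨hIP, fun x hx a _ => hI.2 x hx a trivial⟩

theorem IsIdealIn.le_mulAnnihilator_of_inf_eq_bot (hbil : IsBilinearMul F mul)
    {I J : Submodule F B} (hI : IsIdealIn mul ⊤ I) (hJ : IsIdealIn mul ⊤ J) (hIJ : I ⊓ J = ⊥) :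
    J ≤ mulAnnihilator hbil I := by
  intro x hx
  refine mem_mulAnnihilator.2 fun y hy => ?_
  have hxy := hJ.mul_mem_inf hI hx hy
  have hyx := hI.mul_mem_inf hJ hy hx
  rw [inf_comm, hIJ] at hxy
  rw [hIJ] at hyx
  exact ⟨hxy, hyx⟩

theorem ne_bot_of_mul_ne_zero (hbil : IsBilinearMul F mul) {P : Submodule F B}
    (h : ∃ x ∈ P, ∃ y ∈ P, mul x y ≠ 0) : P ≠ ⊥ := by
  rintro rfl
  obtain ⟨x, hx, y, -, hxy⟩ := h
  rw [(Submodule.mem_bot F).1 hx, hbil.zero_mul_s14] at hxy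
  exact hxy rfl

theorem IsSimpleAlgOn.inf_mulAnnihilator_eq_bot (hbil : IsBilinearMul F mul) {J : Submodule F B}
    (hJ : IsSimpleAlgOn mul J) : J ⊓ mulAnnihilator hbil J = ⊥ := by
  have hideal : IsIdealIn mul J (J ⊓ mulAnnihilator hbil J) := by
    refine ⟨inf_le_left, fun x hx a ha => ?_⟩
    obtain ⟨hxa, hax⟩ := mem_mulAnnihilator.1 hx.2 a ha
    rw [hxa, hax]
    exact ⟨zero_mem _, zero_mem _⟩
  refine (hJ.2 _ hideal).resolve_right fun hJJ => ?_
  obtain ⟨x, hx, y, hy, hxy⟩ := hJ.1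
  rw [← hJJ] at hy
  exact hxy (mem_mulAnnihilator.1 hy.2 x hx).2

end Ideals

section Semisimple

variable {F B : Type*} [Field F] [AddCommGroup B] [Module F B] {mul : B → B → B}
  {ι : Type*} {S : ι → Submodule F B}

structure IsSimpleIdealDecomposition (mul : B → B → B) (S : ι → Submodule F B) : Prop where
  indep : iSupIndep S
  iSup_eq_top : ⨆ i, S i = ⊤
  isIdealIn : ∀ i, IsIdealIn mul ⊤ (S i)
  isSimpleAlgOn : ∀ i, IsSimpleAlgOn mul (S i)

namespace IsSimpleIdealDecomposition

theorem ne_bot (hS : IsSimpleIdealDecomposition mul S) (hbil : IsBilinearMul F mul) (k : ι) :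
    S k ≠ ⊥ :=
  ne_bot_of_mul_ne_zero hbil (hS.isSimpleAlgOn k).1

theorem inf_eq_bot_of_not_le (hS : IsSimpleIdealDecomposition mul S) {I : Submodule F B}
    (hI : IsIdealIn mul ⊤ I) {k : ι} (hk : ¬ S k ≤ I) : I ⊓ S k = ⊥ :=
  ((hS.isSimpleAlgOn k).2 _ ((hI.inf (hS.isIdealIn k)).of_le inf_le_right)).resolve_right
    fun h => hk (h ▸ inf_le_left)

theorem le_mulAnnihilator_of_not_le (hS : IsSimpleIdealDecomposition mul S)
    (hbil : IsBilinearMul F mul) {I : Submodule F B} (hI : IsIdealIn mul ⊤ I) {k : ι}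
    (hk : ¬ S k ≤ I) : S k ≤ mulAnnihilator hbil I :=
  hI.le_mulAnnihilator_of_inf_eq_bot hbil (hS.isIdealIn k) (hS.inf_eq_bot_of_not_le hI hk)

theorem not_le_of_ne (hS : IsSimpleIdealDecomposition mul S) (hbil : IsBilinearMul F mul)
    {j k : ι} (hjk : j ≠ k) : ¬ S j ≤ S k :=
  fun hle => hS.ne_bot hbil j ((hS.indep.pairwiseDisjoint hjk).eq_bot_of_le hle)

theorem sup_mulAnnihilator_eq_top (hS : IsSimpleIdealDecomposition mul S)
    (hbil : IsBilinearMul F mul) {I : Submodule F B} (hI : IsIdealIn mul ⊤ I) :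
    I ⊔ mulAnnihilator hbil I = ⊤ := by
  rw [eq_top_iff, ← hS.iSup_eq_top]
  refine iSup_le fun k => ?_
  by_cases hk : S k ≤ I
  · exact le_sup_of_le_left hk
  · exact le_sup_of_le_right (hS.le_mulAnnihilator_of_not_le hbil hI hk)

theorem isIdealIn_of_isIdealIn (hS : IsSimpleIdealDecomposition mul S)
    (hbil : IsBilinearMul F mul) {P I : Submodule F B} (hP : IsIdealIn mul ⊤ P)
    (hI : IsIdealIn mul P I) : IsIdealIn mul ⊤ I := by
  refine ⟨le_top, fun x hx a _ => ?_⟩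
  obtain ⟨p, hp, q, hq, rfl⟩ :=
    Submodule.mem_sup.1 ((hS.sup_mulAnnihilator_eq_top hbil hP).ge (Submodule.mem_top (x := a)))
  obtain ⟨hqx, hxq⟩ := mem_mulAnnihilator.1 hq x (hI.1 hx)
  rw [hbil.1, hbil.2.1, hqx, hxq, add_zero, add_zero]
  exact hI.2 x hx p hp

section Fintype

variable [Fintype ι]

theorem exists_sum_eq (hS : IsSimpleIdealDecomposition mul S) (x : B) :
    ∃ y : ι → B, (∀ k, y k ∈ S k) ∧ ∑ k, y k = x := by
  have hx : x ∈ ⨆ i ∈ Finset.univ, S i := by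
    simp only [Finset.mem_univ, iSup_pos, hS.iSup_eq_top, Submodule.mem_top]
  obtain ⟨μ, hμ⟩ := (Submodule.mem_iSup_finset_iff_exists_sum S x).1 hx
  exact ⟨fun i => μ i, fun i => (μ i).2, hμ⟩

/-- Multiplication by an element of `S k` only sees the `k`-th component, since the simple
ideals annihilate each other. -/
theorem component_eq_zero_of_sum_mem_mulAnnihilator (hS : IsSimpleIdealDecomposition mul S)
    (hbil : IsBilinearMul F mul) {y : ι → B} (hy : ∀ j, y j ∈ S j) {k : ι}
    (h : ∑ j, y j ∈ mulAnnihilator hbil (S k)) : y k = 0 := by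
  have hyk : y k ∈ S k ⊓ mulAnnihilator hbil (S k) := by
    refine ⟨hy k, mem_mulAnnihilator.2 fun s hs => ?_⟩
    have hothers : ∀ j ≠ k, mul (y j) s = 0 ∧ mul s (y j) = 0 := fun j hjk =>
      mem_mulAnnihilator.1
        (hS.le_mulAnnihilator_of_not_le hbil (hS.isIdealIn k) (hS.not_le_of_ne hbil hjk) (hy j))
        s hs
    have hsum := mem_mulAnnihilator.1 h s hs
    rwa [hbil.sum_mul, hbil.mul_sum, Finset.sum_eq_single k (fun j _ hjk => (hothers j hjk).1)
      (by simp), Finset.sum_eq_single k (fun j _ hjk => (hothers j hjk).2) (by simp)] at hsum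
  rwa [(hS.isSimpleAlgOn k).inf_mulAnnihilator_eq_bot hbil, Submodule.mem_bot] at hyk

theorem eq_zero_of_forall_mem_mulAnnihilator (hS : IsSimpleIdealDecomposition mul S)
    (hbil : IsBilinearMul F mul) {z : B} (hz : ∀ k, z ∈ mulAnnihilator hbil (S k)) : z = 0 := by
  obtain ⟨y, hy, rfl⟩ := hS.exists_sum_eq z
  exact Finset.sum_eq_zero fun k _ => hS.component_eq_zero_of_sum_mem_mulAnnihilator hbil hy (hz k)

theorem eq_biSup_of_isIdealIn (hS : IsSimpleIdealDecomposition mul S)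
    (hbil : IsBilinearMul F mul) {I : Submodule F B} (hI : IsIdealIn mul ⊤ I) :
    I = ⨆ k ∈ {k | S k ≤ I}, S k := by
  refine le_antisymm (fun x hx => ?_) (iSup₂_le fun k hk => hk)
  obtain ⟨y, hy, rfl⟩ := hS.exists_sum_eq x
  refine Submodule.sum_mem _ fun k _ => ?_
  by_cases hk : S k ≤ I
  · exact le_iSup₂ (f := fun k (_ : k ∈ {k | S k ≤ I}) => S k) k hk (hy k)
  · have hIk : I ≤ mulAnnihilator hbil (S k) :=
      le_mulAnnihilator_comm.1 (hS.le_mulAnnihilator_of_not_le hbil hI hk)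
    rw [hS.component_eq_zero_of_sum_mem_mulAnnihilator hbil hy (hIk hx)]
    exact zero_mem _

theorem exists_le_of_ne_bot (hS : IsSimpleIdealDecomposition mul S) (hbil : IsBilinearMul F mul)
    {I : Submodule F B} (hI : IsIdealIn mul ⊤ I) (hI0 : I ≠ ⊥) : ∃ k, S k ≤ I := by
  by_contra! h
  apply hI0
  rw [hS.eq_biSup_of_isIdealIn hbil hI]
  simp [h]

theorem inf_mulAnnihilator_eq_bot (hS : IsSimpleIdealDecomposition mul S)
    (hbil : IsBilinearMul F mul) {I : Submodule F B} (hI : IsIdealIn mul ⊤ I) :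
    I ⊓ mulAnnihilator hbil I = ⊥ := by
  refine eq_bot_iff.2 fun z hz =>
    (Submodule.mem_bot F).2 (hS.eq_zero_of_forall_mem_mulAnnihilator hbil fun k => ?_)
  by_cases hk : S k ≤ I
  · exact mulAnnihilator_antitone hbil hk hz.2
  · exact le_mulAnnihilator_comm.1 (hS.le_mulAnnihilator_of_not_le hbil hI hk) hz.1

theorem mulAnnihilator_eq_biSup (hS : IsSimpleIdealDecomposition mul S)
    (hbil : IsBilinearMul F mul) {I : Submodule F B} (hI : IsIdealIn mul ⊤ I) :
    mulAnnihilator hbil I = ⨆ k ∈ {k | ¬ S k ≤ I}, S k := by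
  set Q := ⨆ k ∈ {k | ¬ S k ≤ I}, S k
  have hQ : Q ≤ mulAnnihilator hbil I :=
    iSup₂_le fun k hk => hS.le_mulAnnihilator_of_not_le hbil hI hk
  have hIQ : I ⊔ Q = ⊤ := by
    rw [eq_top_iff, ← hS.iSup_eq_top]
    refine iSup_le fun k => ?_
    by_cases hk : S k ≤ I
    · exact le_sup_of_le_left hk
    · exact le_sup_of_le_right (le_iSup₂ (f := fun k (_ : k ∈ {k | ¬ S k ≤ I}) => S k) k hk)
  refine le_antisymm (fun x hx => ?_) hQ
  obtain ⟨p, hp, q, hq, rfl⟩ := Submodule.mem_sup.1 (hIQ ▸ Submodule.mem_top : x ∈ I ⊔ Q)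
  have hp0 : p ∈ I ⊓ mulAnnihilator hbil I := ⟨hp, by simpa using sub_mem hx (hQ hq)⟩
  rw [hS.inf_mulAnnihilator_eq_bot hbil hI, Submodule.mem_bot] at hp0
  rwa [hp0, zero_add]

theorem isIdealIn_mulAnnihilator (hS : IsSimpleIdealDecomposition mul S)
    (hbil : IsBilinearMul F mul) {I : Submodule F B} (hI : IsIdealIn mul ⊤ I) :
    IsIdealIn mul ⊤ (mulAnnihilator hbil I) := by
  rw [hS.mulAnnihilator_eq_biSup hbil hI]
  exact IsIdealIn.iSup hbil fun k => IsIdealIn.iSup hbil fun _ => hS.isIdealIn k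

theorem isSemisimpleOn_of_isIdealIn (hS : IsSimpleIdealDecomposition mul S)
    (hbil : IsBilinearMul F mul) {P : Submodule F B} (hP : IsIdealIn mul ⊤ P) :
    IsSemisimpleOn mul P := by
  obtain ⟨n, f, hf⟩ := (Set.toFinite {k | S k ≤ P}).fin_embedding
  have hfP : ∀ i, S (f i) ≤ P := fun i => (hf ▸ Set.mem_range_self i : f i ∈ {k | S k ≤ P})
  refine ⟨n, S ∘ f, hS.indep.comp f.injective, ?_,
    fun i => ⟨(hS.isIdealIn (f i)).of_le (hfP i), hS.isSimpleAlgOn (f i)⟩⟩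
  conv_rhs => rw [hS.eq_biSup_of_isIdealIn hbil hP, ← hf]
  exact (iSup_range (g := S) (f := ⇑f)).symm

theorem exists_le_of_le_iSup (hS : IsSimpleIdealDecomposition mul S) (hbil : IsBilinearMul F mul)
    {κ : Type*} {J : κ → Submodule F B} (hJ : ∀ i, IsIdealIn mul ⊤ (J i))
    (htop : ⨆ i, J i = ⊤) (k : ι) : ∃ i, S k ≤ J i := by
  by_contra! h
  have hk : S k ≤ mulAnnihilator hbil ⊤ := by
    rw [← htop, mulAnnihilator_iSup]
    exact le_iInf fun i => hS.le_mulAnnihilator_of_not_le hbil (hJ i) (h i)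
  have hann := hS.inf_mulAnnihilator_eq_bot hbil isIdealIn_top
  rw [top_inf_eq] at hann
  exact hS.ne_bot hbil k (le_bot_iff.1 (hann ▸ hk))

end Fintype

end IsSimpleIdealDecomposition

end Semisimple

section Graded

open DirectSum

variable {F B G : Type*} [Field F] [AddCommGroup B] [Module F B] [DecidableEq G]
  (𝒜 : G → Submodule F B) [Decomposition 𝒜]

theorem isGradedSubmoduleFam_iff_isHomogeneous {P : Submodule F B} :
    IsGradedSubmoduleFam 𝒜 P ↔ SetLike.IsHomogeneous 𝒜 P := by
  classical
  constructor
  · intro hP i x hx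
    rw [IsGradedSubmoduleFam] at hP
    rw [hP] at hx
    induction hx using Submodule.iSup_induction' with
    | mem j x hx =>
      by_cases hji : j = i
      · subst hji
        rw [decompose_of_mem_same 𝒜 hx.2]
        exact hx.1
      · rw [decompose_of_mem_ne 𝒜 hx.2 hji]
        exact zero_mem _
    | zero => simp
    | add x y _ _ hx hy =>
      rw [decompose_add, DirectSum.add_apply, Submodule.coe_add]
      exact add_mem hx hy
  · intro hP
    refine le_antisymm (fun x hx => ?_) (iSup_le fun i => inf_le_left)
    rw [← sum_support_decompose 𝒜 x]
    exact Submodule.sum_mem _ fun i _ =>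
      Submodule.mem_iSup_of_mem i ⟨hP i hx, (decompose 𝒜 x i).2⟩

variable [AddCommGroup G]

theorem coe_decompose_map_add {f : B →ₗ[F] B} {h : G}
    (hf : ∀ i, ∀ x ∈ 𝒜 i, f x ∈ 𝒜 (i + h)) (x : B) (g : G) :
    (decompose 𝒜 (f x) (g + h) : B) = f (decompose 𝒜 x g) := by
  induction x using Decomposition.inductionOn 𝒜 with
  | zero => simp
  | @homogeneous i x =>
    rw [decompose_coe]
    by_cases hig : i = g
    · subst hig
      rw [decompose_of_mem_same 𝒜 (hf i x x.2), of_eq_same]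
    · rw [decompose_of_mem_ne 𝒜 (hf i x x.2) fun h' => hig (add_right_cancel h'),
        of_eq_of_ne _ _ _ (Ne.symm hig), ZeroMemClass.coe_zero, map_zero]
  | add x y hx hy =>
    rw [map_add, decompose_add, DirectSum.add_apply, Submodule.coe_add, hx, hy,
      decompose_add, DirectSum.add_apply, Submodule.coe_add, map_add]

variable {𝒜}
variable {mul : B → B → B}

theorem coe_decompose_mul_add_of_right_mem (hbil : IsBilinearMul F mul)
    (hgmul : ∀ g h : G, ∀ x ∈ 𝒜 g, ∀ y ∈ 𝒜 h, mul x y ∈ 𝒜 (g + h)) {y : B} {h : G}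
    (hy : y ∈ 𝒜 h) (x : B) (g : G) :
    (decompose 𝒜 (mul x y) (g + h) : B) = mul (decompose 𝒜 x g) y :=
  coe_decompose_map_add 𝒜 (f := hbil.toLinearMap₂.flip y) (fun i x hx => hgmul i h x hx y hy) x g

theorem coe_decompose_mul_add_of_left_mem (hbil : IsBilinearMul F mul)
    (hgmul : ∀ g h : G, ∀ x ∈ 𝒜 g, ∀ y ∈ 𝒜 h, mul x y ∈ 𝒜 (g + h)) {x : B} {h : G}
    (hx : x ∈ 𝒜 h) (y : B) (g : G) :
    (decompose 𝒜 (mul x y) (g + h) : B) = mul x (decompose 𝒜 y g) :=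
  coe_decompose_map_add 𝒜 (f := hbil.toLinearMap₂ x)
    (fun i y hy => add_comm h i ▸ hgmul h i x hx y hy) y g

theorem IsGradedSubmoduleFam.mulAnnihilator (hbil : IsBilinearMul F mul)
    (hgmul : ∀ g h : G, ∀ x ∈ 𝒜 g, ∀ y ∈ 𝒜 h, mul x y ∈ 𝒜 (g + h)) {P : Submodule F B}
    (hP : IsGradedSubmoduleFam 𝒜 P) : IsGradedSubmoduleFam 𝒜 (mulAnnihilator hbil P) := by
  classical
  rw [isGradedSubmoduleFam_iff_isHomogeneous] at hP ⊢
  intro g x hx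
  refine mem_mulAnnihilator.2 fun y hy => ?_
  rw [← sum_support_decompose 𝒜 y, hbil.mul_sum, hbil.sum_mul]
  refine ⟨Finset.sum_eq_zero fun h _ => ?_, Finset.sum_eq_zero fun h _ => ?_⟩
  all_goals obtain ⟨hxy, hyx⟩ := mem_mulAnnihilator.1 hx _ (hP h hy)
  · rw [← coe_decompose_mul_add_of_right_mem hbil hgmul (decompose 𝒜 y h).2, hxy]
    simp
  · rw [← coe_decompose_mul_add_of_left_mem hbil hgmul (decompose 𝒜 y h).2, hyx]
    simp

end Graded

section GradedSimple

variable {F B G : Type*} [Field F] [AddCommGroup B] [Module F B] {mul : B → B → B}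
  {𝒜 : G → Submodule F B}

def gradedIdealSpan (mul : B → B → B) (𝒜 : G → Submodule F B) (U : Submodule F B) :
    Submodule F B :=
  sInf {I | IsIdealIn mul ⊤ I ∧ IsGradedSubmoduleFam 𝒜 I ∧ U ≤ I}

theorem isIdealIn_gradedIdealSpan (mul : B → B → B) (𝒜 : G → Submodule F B)
    (U : Submodule F B) : IsIdealIn mul ⊤ (gradedIdealSpan mul 𝒜 U) :=
  IsIdealIn.sInf fun _ hI => hI.1

theorem isGradedSubmoduleFam_gradedIdealSpan [DecidableEq G] (mul : B → B → B)
    (𝒜 : G → Submodule F B) [DirectSum.Decomposition 𝒜] (U : Submodule F B) :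
    IsGradedSubmoduleFam 𝒜 (gradedIdealSpan mul 𝒜 U) := by
  rw [isGradedSubmoduleFam_iff_isHomogeneous]
  exact fun g x hx => Submodule.mem_sInf.2 fun I hI =>
    (isGradedSubmoduleFam_iff_isHomogeneous 𝒜).1 hI.2.1 g (Submodule.mem_sInf.1 hx I hI)

theorem le_gradedIdealSpan (mul : B → B → B) (𝒜 : G → Submodule F B) (U : Submodule F B) :
    U ≤ gradedIdealSpan mul 𝒜 U :=
  le_sInf fun _ hI => hI.2.2

theorem gradedIdealSpan_le {U I : Submodule F B} (hI : IsIdealIn mul ⊤ I)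
    (hIg : IsGradedSubmoduleFam 𝒜 I) (hUI : U ≤ I) : gradedIdealSpan mul 𝒜 U ≤ I :=
  sInf_le ⟨hI, hIg, hUI⟩

theorem gradedIdealSpan_le_gradedIdealSpan [DecidableEq G] [DirectSum.Decomposition 𝒜]
    {U V : Submodule F B} (h : U ≤ gradedIdealSpan mul 𝒜 V) :
    gradedIdealSpan mul 𝒜 U ≤ gradedIdealSpan mul 𝒜 V :=
  gradedIdealSpan_le (isIdealIn_gradedIdealSpan mul 𝒜 V)
    (isGradedSubmoduleFam_gradedIdealSpan mul 𝒜 V) h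

def IsGradedSimpleIdeal (mul : B → B → B) (𝒜 : G → Submodule F B) (P : Submodule F B) : Prop :=
  IsIdealIn mul ⊤ P ∧ IsGradedSubmoduleFam 𝒜 P ∧ (∃ x ∈ P, ∃ y ∈ P, mul x y ≠ 0) ∧
    ∀ I : Submodule F B, IsIdealIn mul P I → IsGradedSubmoduleFam 𝒜 I → I = ⊥ ∨ I = P

theorem IsGradedSimpleIdeal.eq_gradedIdealSpan [DecidableEq G] [DirectSum.Decomposition 𝒜]
    {P U : Submodule F B} (hP : IsGradedSimpleIdeal mul 𝒜 P) (hU : U ≠ ⊥) (hUP : U ≤ P) :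
    P = gradedIdealSpan mul 𝒜 U := by
  have hle : gradedIdealSpan mul 𝒜 U ≤ P := gradedIdealSpan_le hP.1 hP.2.1 hUP
  refine ((hP.2.2.2 _ ((isIdealIn_gradedIdealSpan mul 𝒜 U).of_le hle)
    (isGradedSubmoduleFam_gradedIdealSpan mul 𝒜 U)).resolve_left fun h => hU ?_).symm
  exact le_bot_iff.1 (h ▸ le_gradedIdealSpan mul 𝒜 U)

namespace IsSimpleIdealDecomposition

variable {ι : Type*} [Fintype ι] {S : ι → Submodule F B} [DecidableEq G]
  [DirectSum.Decomposition 𝒜]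

theorem le_mulAnnihilator_of_ne (hS : IsSimpleIdealDecomposition mul S)
    (hbil : IsBilinearMul F mul) {P Q : Submodule F B} (hP : IsGradedSimpleIdeal mul 𝒜 P)
    (hQ : IsGradedSimpleIdeal mul 𝒜 Q) (hPQ : P ≠ Q) : Q ≤ mulAnnihilator hbil P := by
  refine hP.1.le_mulAnnihilator_of_inf_eq_bot hbil hQ.1 (by_contra fun h => hPQ ?_)
  obtain ⟨k, hk⟩ := hS.exists_le_of_ne_bot hbil (hP.1.inf hQ.1) h
  rw [hP.eq_gradedIdealSpan (hS.ne_bot hbil k) (hk.trans inf_le_left),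
    hQ.eq_gradedIdealSpan (hS.ne_bot hbil k) (hk.trans inf_le_right)]

theorem iSupIndep_of_isGradedSimpleIdeal (hS : IsSimpleIdealDecomposition mul S)
    (hbil : IsBilinearMul F mul) {κ : Type*} {J : κ → Submodule F B}
    (hJ : ∀ i, IsGradedSimpleIdeal mul 𝒜 (J i)) (hinj : Function.Injective J) : iSupIndep J := by
  intro i
  rw [disjoint_iff, ← le_bot_iff, ← hS.inf_mulAnnihilator_eq_bot hbil (hJ i).1]
  exact inf_le_inf_left _ (iSup₂_le fun j hji =>
    hS.le_mulAnnihilator_of_ne hbil (hJ i) (hJ j) (hinj.ne (Ne.symm hji)))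

variable [AddCommGroup G]

/-- If `S k` were not inside the graded ideal generated by `S l`, the annihilator of the latter,
being a graded ideal containing `S k`, would contain `S l` as well. -/
theorem gradedIdealSpan_eq_of_le (hS : IsSimpleIdealDecomposition mul S)
    (hbil : IsBilinearMul F mul)
    (hgmul : ∀ g h : G, ∀ x ∈ 𝒜 g, ∀ y ∈ 𝒜 h, mul x y ∈ 𝒜 (g + h)) {k l : ι}
    (hlk : S l ≤ gradedIdealSpan mul 𝒜 (S k)) :
    gradedIdealSpan mul 𝒜 (S k) = gradedIdealSpan mul 𝒜 (S l) := by
  have hCl := isIdealIn_gradedIdealSpan mul 𝒜 (S l)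
  refine le_antisymm (gradedIdealSpan_le_gradedIdealSpan ?_) (gradedIdealSpan_le_gradedIdealSpan hlk)
  by_contra hk
  have hann : gradedIdealSpan mul 𝒜 (S k) ≤ mulAnnihilator hbil (gradedIdealSpan mul 𝒜 (S l)) :=
    gradedIdealSpan_le (hS.isIdealIn_mulAnnihilator hbil hCl)
      ((isGradedSubmoduleFam_gradedIdealSpan mul 𝒜 _).mulAnnihilator hbil hgmul)
      (hS.le_mulAnnihilator_of_not_le hbil hCl hk)
  have hl := le_inf (le_gradedIdealSpan mul 𝒜 (S l)) (hlk.trans hann)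
  rw [hS.inf_mulAnnihilator_eq_bot hbil hCl] at hl
  exact hS.ne_bot hbil l (le_bot_iff.1 hl)

theorem isGradedSimpleIdeal_gradedIdealSpan (hS : IsSimpleIdealDecomposition mul S)
    (hbil : IsBilinearMul F mul)
    (hgmul : ∀ g h : G, ∀ x ∈ 𝒜 g, ∀ y ∈ 𝒜 h, mul x y ∈ 𝒜 (g + h)) (k : ι) :
    IsGradedSimpleIdeal mul 𝒜 (gradedIdealSpan mul 𝒜 (S k)) := by
  have hCk := isIdealIn_gradedIdealSpan mul 𝒜 (S k)
  refine ⟨hCk, isGradedSubmoduleFam_gradedIdealSpan mul 𝒜 _, ?_, fun I hI hIg => ?_⟩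
  · obtain ⟨x, hx, y, hy, hxy⟩ := (hS.isSimpleAlgOn k).1
    exact ⟨x, le_gradedIdealSpan mul 𝒜 _ hx, y, le_gradedIdealSpan mul 𝒜 _ hy, hxy⟩
  refine or_iff_not_imp_left.2 fun hI0 => le_antisymm hI.1 ?_
  have hI' := hS.isIdealIn_of_isIdealIn hbil hCk hI
  obtain ⟨l, hl⟩ := hS.exists_le_of_ne_bot hbil hI' hI0
  rw [hS.gradedIdealSpan_eq_of_le hbil hgmul (hl.trans hI.1)]
  exact gradedIdealSpan_le hI' hIg hl

theorem setOf_isGradedSimpleIdeal_eq_range (hS : IsSimpleIdealDecomposition mul S)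
    (hbil : IsBilinearMul F mul)
    (hgmul : ∀ g h : G, ∀ x ∈ 𝒜 g, ∀ y ∈ 𝒜 h, mul x y ∈ 𝒜 (g + h)) :
    {P | IsGradedSimpleIdeal mul 𝒜 P} = Set.range fun k => gradedIdealSpan mul 𝒜 (S k) := by
  refine Set.Subset.antisymm (fun P hP => ?_)
    (Set.range_subset_iff.2 (hS.isGradedSimpleIdeal_gradedIdealSpan hbil hgmul))
  obtain ⟨k, hk⟩ := hS.exists_le_of_ne_bot hbil hP.1 (ne_bot_of_mul_ne_zero hbil hP.2.2.1)
  exact ⟨k, (hP.eq_gradedIdealSpan (hS.ne_bot hbil k) hk).symm⟩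

theorem range_eq_setOf_isGradedSimpleIdeal (hS : IsSimpleIdealDecomposition mul S)
    (hbil : IsBilinearMul F mul)
    (hgmul : ∀ g h : G, ∀ x ∈ 𝒜 g, ∀ y ∈ 𝒜 h, mul x y ∈ 𝒜 (g + h)) {κ : Type*}
    {J : κ → Submodule F B} (hJ : ∀ i, IsGradedSimpleIdeal mul 𝒜 (J i)) (htop : ⨆ i, J i = ⊤) :
    Set.range J = {P | IsGradedSimpleIdeal mul 𝒜 P} := by
  refine Set.Subset.antisymm (Set.range_subset_iff.2 hJ) fun P hP => ?_
  rw [hS.setOf_isGradedSimpleIdeal_eq_range hbil hgmul] at hP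
  obtain ⟨k, rfl⟩ := hP
  obtain ⟨i, hi⟩ := hS.exists_le_of_le_iSup hbil (fun i => (hJ i).1) htop k
  exact ⟨i, (hJ i).eq_gradedIdealSpan (hS.ne_bot hbil k) hi⟩

end IsSimpleIdealDecomposition

end GradedSimple

theorem exists_equiv_of_range_eq {α ι κ : Type*} {f : ι → α} {g : κ → α}
    (hf : Function.Injective f) (hg : Function.Injective g) (h : Set.range f = Set.range g) :
    ∃ e : ι ≃ κ, ∀ i, f i = g (e i) :=
  ⟨(Equiv.ofInjective f hf).trans ((Equiv.setCongr h).trans (Equiv.ofInjective g hg).symm),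
    fun i => by simp [Equiv.apply_ofInjective_symm]⟩

/-- a semisimple `G`-graded algebra is the direct sum of graded ideals which are
graded-simple and semisimple, and the graded-simple factors are uniquely determined up to
reordering. -/
theorem stmt_14 {F B : Type*} [Field F] [AddCommGroup B] [Module F B]
    {G : Type*} [AddCommGroup G] [DecidableEq G]
    (mul : B → B → B) (hbil : IsBilinearMul F mul)
    (𝒜 : G → Submodule F B) (hint : DirectSum.IsInternal 𝒜)
    (hgmul : ∀ g h : G, ∀ x ∈ 𝒜 g, ∀ y ∈ 𝒜 h, mul x y ∈ 𝒜 (g + h))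
    (hss : IsSemisimpleOn mul (⊤ : Submodule F B)) :
    ∃ (n : ℕ) (J : Fin n → Submodule F B),
      iSupIndep J ∧ (⨆ i, J i) = ⊤ ∧
      (∀ i, IsIdealIn mul ⊤ (J i) ∧ IsGradedSubmoduleFam 𝒜 (J i) ∧
        IsSemisimpleOn mul (J i) ∧
        (∃ x ∈ J i, ∃ y ∈ J i, mul x y ≠ 0) ∧
        (∀ I : Submodule F B, IsIdealIn mul (J i) I → IsGradedSubmoduleFam 𝒜 I →
          I = ⊥ ∨ I = J i)) ∧
      (∀ (n' : ℕ) (J' : Fin n' → Submodule F B),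
        iSupIndep J' → (⨆ i, J' i) = ⊤ →
        (∀ i, IsIdealIn mul ⊤ (J' i) ∧ IsGradedSubmoduleFam 𝒜 (J' i) ∧
          (∃ x ∈ J' i, ∃ y ∈ J' i, mul x y ≠ 0) ∧
          (∀ I : Submodule F B, IsIdealIn mul (J' i) I → IsGradedSubmoduleFam 𝒜 I →
            I = ⊥ ∨ I = J' i)) →
        ∃ e : Fin n' ≃ Fin n, ∀ i, J' i = J (e i)) := by
  let := hint.chooseDecomposition
  obtain ⟨m, S, hind, htop, hsimple⟩ := hss
  have hS : IsSimpleIdealDecomposition mul S :=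
    ⟨hind, htop, fun k => (hsimple k).1, fun k => (hsimple k).2⟩
  have hfin : {P | IsGradedSimpleIdeal mul 𝒜 P}.Finite :=
    hS.setOf_isGradedSimpleIdeal_eq_range hbil hgmul ▸ Set.finite_range _
  obtain ⟨n, J, hJ⟩ := hfin.fin_embedding
  have hJT : ∀ i, IsGradedSimpleIdeal mul 𝒜 (J i) := fun i => hJ.subset ⟨i, rfl⟩
  refine ⟨n, J, hS.iSupIndep_of_isGradedSimpleIdeal hbil hJT J.injective, ?_, fun i => ?_,
    fun n' J' hind' htop' hJ' => ?_⟩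
  · rw [eq_top_iff, ← htop]
    refine iSup_le fun k => ?_
    obtain ⟨i, hi⟩ : gradedIdealSpan mul 𝒜 (S k) ∈ Set.range J :=
      hJ ▸ hS.isGradedSimpleIdeal_gradedIdealSpan hbil hgmul k
    exact (le_gradedIdealSpan mul 𝒜 (S k)).trans (hi ▸ le_iSup J i)
  · obtain ⟨hideal, hgraded, hmul, hgsimple⟩ := hJT i
    exact ⟨hideal, hgraded, hS.isSemisimpleOn_of_isIdealIn hbil hideal, hmul, hgsimple⟩
  · refine exists_equiv_of_range_eq
      (hind'.injective fun i => ne_bot_of_mul_ne_zero hbil (hJ' i).2.2.1) J.injective ?_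
    rw [hS.range_eq_setOf_isGradedSimpleIdeal hbil hgmul hJ' htop', hJ]
end
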